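/- Let N, m, n be positive integers with m odd, m ≥ 3, n ≡ N (mod 2), n ≥ N, and such that either m ≥ 5 or n ≥ 3N. Let A, B, Ω be real numbers and set u(τ,x) = A·cos τ·sin(N x) + B·cos(m τ)·sin(n x), and let R(τ,x) = Ω² ∂²_τ u(τ,x) − ∂²_x u(τ,x) + u(τ,x)³/sin²x. Then ∫₀^{2π} ∫₀^π R(τ,x)·cos τ·sin(N x) dx dτ = (π²/8)·A·(3N·A² + 6N·B² − 4Ω² + 4N²) and ∫₀^{2π} ∫₀^π R(τ,x)·cos(m τ)·sin(n x) dx dτ = (π²/8)·B·(6N·A² + 3n·B² − 4m²·Ω² + 4n²). -/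

import Mathlib

/-!
Write `sin (k x) = sinRatio k x * sin x`, where `sinRatio k = U_{k-1} ∘ cos` is a cosine polynomial
with frequencies at most `k - 1`. On `(0, π)` the cubic term `u³ / sin² x`, tested against either
mode, is then a sum of products of a time factor and a continuous space factor, so each double
integral splits into products of one-dimensional integrals. All of these reduce to the
orthogonality of `cos (j x)` and `cos (k x)` over a multiple of `π`; in space the key value is
`∫₀^π sinRatio a ^ 2 * sin (b x) ^ 2 = a π / 2` for `a ≤ b`, since `sinRatio a ^ 2` only carries
frequencies below `2 a - 1`. The one coupling that orthogonality does not remove is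
`∫ cos³ τ cos (m τ) · ∫ sinRatio N ^ 2 * sin (N x) * sin (n x)`: its time factor vanishes unless
`m = 3`, and its space factor vanishes once `n ≥ 3 N`.
-/

open Real Set intervalIntegral

noncomputable def sinRatio (a : ℕ) (x : ℝ) : ℝ :=
  (Polynomial.Chebyshev.U ℝ ((a : ℤ) - 1)).eval (cos x)

theorem sin_natCast_mul_eq_sinRatio_mul (a : ℕ) (x : ℝ) :
    sin (a * x) = sinRatio a x * sin x := by
  rw [sinRatio, Polynomial.Chebyshev.U_real_cos]
  push_cast
  ring_nf

@[fun_prop]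
theorem continuous_sinRatio (a : ℕ) : Continuous (sinRatio a) :=
  (Polynomial.continuous _).comp continuous_cos

@[simp]
theorem sinRatio_zero (x : ℝ) : sinRatio 0 x = 0 := by simp [sinRatio]

@[simp]
theorem sinRatio_one (x : ℝ) : sinRatio 1 x = 1 := by simp [sinRatio]

theorem sinRatio_add_two (a : ℕ) (x : ℝ) :
    sinRatio (a + 2) x = sinRatio a x + 2 * cos ((a + 1) * x) := by
  have hidx : ((a + 2 : ℕ) : ℤ) - 1 = (a : ℤ) - 1 + 2 := by push_cast; ring
  rw [sinRatio, sinRatio, hidx, Polynomial.Chebyshev.U_eq_two_mul_T_add_U, Polynomial.eval_add,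
    Polynomial.eval_mul, Polynomial.eval_ofNat, Polynomial.Chebyshev.T_real_cos]
  push_cast
  ring_nf

section MultipleOfPi

variable {T : ℝ} (hT : sin T = 0)
include hT

theorem sin_int_mul_eq_zero_of_sin_eq_zero (k : ℤ) : sin (k * T) = 0 := by
  obtain ⟨l, rfl⟩ := sin_eq_zero_iff.1 hT
  simpa [mul_assoc] using sin_int_mul_pi (k * l)

theorem integral_cos_int_mul_of_ne_zero {k : ℤ} (hk : k ≠ 0) :
    ∫ x in 0..T, cos (k * x) = 0 := by
  rw [integral_comp_mul_left (fun y => cos y) (Int.cast_ne_zero.2 hk), integral_cos,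
    sin_int_mul_eq_zero_of_sin_eq_zero hT, mul_zero, sin_zero, sub_zero, smul_zero]

theorem integral_cos_mul_cos_of_ne {j k : ℤ} (h : j ≠ k) (h' : j ≠ -k) :
    ∫ x in 0..T, cos (j * x) * cos (k * x) = 0 := by
  have hsplit (x : ℝ) : cos (j * x) * cos (k * x)
      = (cos (((j - k : ℤ) : ℝ) * x) + cos (((j + k : ℤ) : ℝ) * x)) / 2 := by
    push_cast
    rw [sub_mul, add_mul, ← two_mul_cos_mul_cos]
    ring
  simp (disch := exact Continuous.intervalIntegrable (by fun_prop) _ _) only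
    [hsplit, integral_div, integral_add]
  rw [integral_cos_int_mul_of_ne_zero hT (sub_ne_zero.2 h),
    integral_cos_int_mul_of_ne_zero hT (by omega)]
  simp

theorem integral_cos_int_mul_sq {k : ℤ} (hk : k ≠ 0) :
    ∫ x in 0..T, cos (k * x) ^ 2 = T / 2 := by
  have hsplit (x : ℝ) : cos (k * x) ^ 2 = 1 / 2 + cos (((2 * k : ℤ) : ℝ) * x) / 2 := by
    push_cast
    rw [cos_sq, mul_assoc]
  simp (disch := exact Continuous.intervalIntegrable (by fun_prop) _ _) only
    [hsplit, integral_div, integral_add, integral_const]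
  rw [integral_cos_int_mul_of_ne_zero hT (by omega)]
  simp

theorem integral_cos_int_mul_pow_four {k : ℤ} (hk : k ≠ 0) :
    ∫ x in 0..T, cos (k * x) ^ 4 = 3 * T / 8 := by
  have hsplit (x : ℝ) : cos (k * x) ^ 4
      = 1 / 4 + cos (((2 * k : ℤ) : ℝ) * x) / 2 + cos (((2 * k : ℤ) : ℝ) * x) ^ 2 / 4 := by
    push_cast
    rw [show cos (k * x) ^ 4 = (cos (k * x) ^ 2) ^ 2 by ring, cos_sq, mul_assoc]
    ring
  simp (disch := exact Continuous.intervalIntegrable (by fun_prop) _ _) only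
    [hsplit, integral_div, integral_add, integral_const]
  rw [integral_cos_int_mul_of_ne_zero hT (by omega), integral_cos_int_mul_sq hT (by omega)]
  simp
  ring

theorem integral_cos_int_mul_sq_mul_cos_int_mul_sq {j k : ℤ} (hj : j ≠ 0) (hk : k ≠ 0)
    (h : j ≠ k) (h' : j ≠ -k) :
    ∫ x in 0..T, cos (j * x) ^ 2 * cos (k * x) ^ 2 = T / 4 := by
  have hsplit (x : ℝ) : cos (j * x) ^ 2 * cos (k * x) ^ 2
      = 1 / 4 + cos (((2 * j : ℤ) : ℝ) * x) / 4 + cos (((2 * k : ℤ) : ℝ) * x) / 4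
        + cos (((2 * j : ℤ) : ℝ) * x) * cos (((2 * k : ℤ) : ℝ) * x) / 4 := by
    push_cast
    rw [cos_sq, cos_sq, mul_assoc, mul_assoc]
    ring
  simp (disch := exact Continuous.intervalIntegrable (by fun_prop) _ _) only
    [hsplit, integral_div, integral_add, integral_const]
  rw [integral_cos_int_mul_of_ne_zero hT (by omega), integral_cos_int_mul_of_ne_zero hT (by omega),
    integral_cos_mul_cos_of_ne hT (by omega) (by omega)]
  simp

theorem integral_cos_int_mul_pow_three_mul_cos {j k : ℤ} (h₁ : j ≠ k) (h₁' : j ≠ -k)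
    (h₃ : 3 * j ≠ k) (h₃' : 3 * j ≠ -k) :
    ∫ x in 0..T, cos (j * x) ^ 3 * cos (k * x) = 0 := by
  have hsplit (x : ℝ) : cos (j * x) ^ 3 * cos (k * x)
      = 3 / 4 * (cos (j * x) * cos (k * x))
        + 1 / 4 * (cos (((3 * j : ℤ) : ℝ) * x) * cos (k * x)) := by
    push_cast
    rw [mul_assoc, cos_three_mul]
    ring
  simp (disch := exact Continuous.intervalIntegrable (by fun_prop) _ _) only
    [hsplit, integral_const_mul, integral_add]
  rw [integral_cos_mul_cos_of_ne hT h₁ h₁', integral_cos_mul_cos_of_ne hT h₃ h₃']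
  simp

theorem integral_sinRatio_mul_cos {a : ℕ} {c : ℤ} (h : a ≤ c) :
    ∫ x in 0..T, sinRatio a x * cos (c * x) = 0 := by
  induction a using Nat.twoStepInduction generalizing c with
  | zero => simp
  | one => simpa using integral_cos_int_mul_of_ne_zero hT (k := c) (by omega)
  | more a ih _ =>
    have hsplit (x : ℝ) : sinRatio (a + 2) x * cos (c * x)
        = sinRatio a x * cos (c * x) + 2 * (cos (((a + 1 : ℤ) : ℝ) * x) * cos (c * x)) := by
      push_cast
      rw [sinRatio_add_two]
      ring
    simp (disch := exact Continuous.intervalIntegrable (by fun_prop) _ _) only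
      [hsplit, integral_add, integral_const_mul]
    rw [ih (by omega), integral_cos_mul_cos_of_ne hT (by omega) (by omega)]
    simp

theorem integral_sinRatio_sq_mul_cos {a : ℕ} {c : ℤ} (h : 2 * a ≤ c + 1) :
    ∫ x in 0..T, sinRatio a x ^ 2 * cos (c * x) = 0 := by
  induction a using Nat.twoStepInduction generalizing c with
  | zero => simp
  | one => simpa using integral_cos_int_mul_of_ne_zero hT (k := c) (by omega)
  | more a ih _ =>
    have hsplit (x : ℝ) : sinRatio (a + 2) x ^ 2 * cos (c * x) = sinRatio a x ^ 2 * cos (c * x)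
        + 2 * (sinRatio a x * cos (((c - (a + 1) : ℤ) : ℝ) * x))
        + 2 * (sinRatio a x * cos (((c + (a + 1) : ℤ) : ℝ) * x))
        + 2 * cos (c * x) + 2 * (cos (((2 * (a + 1) : ℤ) : ℝ) * x) * cos (c * x)) := by
      have hprod : 2 * cos (c * x) * cos ((a + 1) * x)
          = cos ((c - (a + 1)) * x) + cos ((c + (a + 1)) * x) := by
        rw [two_mul_cos_mul_cos]; ring_nf
      have hdouble : cos ((a + 1) * x) ^ 2 = 1 / 2 + cos ((2 * (a + 1)) * x) / 2 := by
        rw [cos_sq]; ring_nf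
      push_cast
      rw [sinRatio_add_two]
      linear_combination (2 * sinRatio a x) * hprod + 4 * cos (c * x) * hdouble
    simp (disch := exact Continuous.intervalIntegrable (by fun_prop) _ _) only
      [hsplit, integral_add, integral_const_mul]
    rw [ih (by omega), integral_sinRatio_mul_cos hT (by omega),
      integral_sinRatio_mul_cos hT (by omega), integral_cos_int_mul_of_ne_zero hT (by omega),
      integral_cos_mul_cos_of_ne hT (by omega) (by omega)]
    simp

theorem integral_sinRatio_sq (a : ℕ) : ∫ x in 0..T, sinRatio a x ^ 2 = a * T := by
  induction a using Nat.twoStepInduction with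
  | zero => simp
  | one => simp
  | more a ih _ =>
    have hsplit (x : ℝ) : sinRatio (a + 2) x ^ 2 = sinRatio a x ^ 2
        + 4 * (sinRatio a x * cos (((a + 1 : ℤ) : ℝ) * x))
        + 4 * cos (((a + 1 : ℤ) : ℝ) * x) ^ 2 := by
      push_cast
      rw [sinRatio_add_two]
      ring
    simp (disch := exact Continuous.intervalIntegrable (by fun_prop) _ _) only
      [hsplit, integral_add, integral_const_mul]
    rw [ih, integral_sinRatio_mul_cos hT (by omega), integral_cos_int_mul_sq hT (by omega)]
    push_cast
    ring

theorem integral_sinRatio_sq_mul_sin_sq {a b : ℕ} (h : a ≤ b) :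
    ∫ x in 0..T, sinRatio a x ^ 2 * sin (b * x) ^ 2 = a * T / 2 := by
  have hsplit (x : ℝ) : sinRatio a x ^ 2 * sin (b * x) ^ 2
      = sinRatio a x ^ 2 / 2 - sinRatio a x ^ 2 * cos (((2 * b : ℤ) : ℝ) * x) / 2 := by
    push_cast
    rw [sin_sq_eq_half_sub, mul_assoc]
    ring
  simp (disch := exact Continuous.intervalIntegrable (by fun_prop) _ _) only
    [hsplit, integral_sub, integral_div]
  rw [integral_sinRatio_sq hT, integral_sinRatio_sq_mul_cos hT (by omega)]
  ring

theorem integral_sin_natCast_mul_sq {b : ℕ} (hb : 0 < b) :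
    ∫ x in 0..T, sin (b * x) ^ 2 = T / 2 := by
  simpa using integral_sinRatio_sq_mul_sin_sq hT (a := 1) hb

theorem integral_sinRatio_sq_mul_sin_mul_sin {a b : ℕ} (h : 3 * a ≤ b) :
    ∫ x in 0..T, sinRatio a x ^ 2 * (sin (a * x) * sin (b * x)) = 0 := by
  have hsplit (x : ℝ) : sinRatio a x ^ 2 * (sin (a * x) * sin (b * x))
      = sinRatio a x ^ 2 * cos (((b - a : ℤ) : ℝ) * x) / 2
        - sinRatio a x ^ 2 * cos (((b + a : ℤ) : ℝ) * x) / 2 := by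
    have hprod := two_mul_sin_mul_sin (b * x) (a * x)
    push_cast
    rw [sub_mul, add_mul]
    linear_combination sinRatio a x ^ 2 / 2 * hprod
  simp (disch := exact Continuous.intervalIntegrable (by fun_prop) _ _) only
    [hsplit, integral_sub, integral_div]
  rw [integral_sinRatio_sq_mul_cos hT (by omega), integral_sinRatio_sq_mul_cos hT (by omega)]
  simp

end MultipleOfPi

theorem integral_integral_eq_sum_mul {ι : Type*} {s : Finset ι} {f g : ι → ℝ → ℝ}
    {F : ℝ → ℝ → ℝ} {a b c d : ℝ} (hcd : c ≤ d)
    (hF : ∀ τ, ∀ x ∈ Ioo c d, F τ x = ∑ i ∈ s, f i τ * g i x)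
    (hf : ∀ i ∈ s, IntervalIntegrable (f i) MeasureTheory.volume a b)
    (hg : ∀ i ∈ s, IntervalIntegrable (g i) MeasureTheory.volume c d) :
    ∫ τ in a..b, ∫ x in c..d, F τ x = ∑ i ∈ s, (∫ τ in a..b, f i τ) * ∫ x in c..d, g i x := by
  have hinner (τ : ℝ) : ∫ x in c..d, F τ x = ∑ i ∈ s, f i τ * ∫ x in c..d, g i x := by
    rw [integral_congr_Ioo_of_le hcd (hF τ), integral_finsetSum fun i hi => (hg i hi).const_mul _]
    simp only [integral_const_mul]
  simp only [hinner]
  rw [integral_finsetSum fun i hi => (hf i hi).mul_const _]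
  simp only [integral_mul_const]

theorem hasDerivAt_cos_const_mul (k t : ℝ) :
    HasDerivAt (fun s => cos (k * s)) (-(k * sin (k * t))) t := by
  simpa [mul_comm] using ((hasDerivAt_id t).const_mul k).cos

theorem hasDerivAt_sin_const_mul (k t : ℝ) :
    HasDerivAt (fun s => sin (k * s)) (k * cos (k * t)) t := by
  simpa [mul_comm] using ((hasDerivAt_id t).const_mul k).sin

theorem deriv_deriv_mul_cos_add_mul_cos (a b k l t : ℝ) :
    deriv (deriv fun s => a * cos (k * s) + b * cos (l * s)) t
      = -(k ^ 2 * (a * cos (k * t))) - l ^ 2 * (b * cos (l * t)) := by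
  have hderiv : deriv (fun s => a * cos (k * s) + b * cos (l * s))
      = fun s => -(a * k) * sin (k * s) + -(b * l) * sin (l * s) := by
    ext s
    rw [(((hasDerivAt_cos_const_mul k s).const_mul a).fun_add
      ((hasDerivAt_cos_const_mul l s).const_mul b)).deriv]
    ring
  rw [hderiv, (((hasDerivAt_sin_const_mul k t).const_mul _).fun_add
    ((hasDerivAt_sin_const_mul l t).const_mul _)).deriv]
  ring

theorem deriv_deriv_mul_sin_add_mul_sin (a b k l t : ℝ) :
    deriv (deriv fun s => a * sin (k * s) + b * sin (l * s)) t
      = -(k ^ 2 * (a * sin (k * t))) - l ^ 2 * (b * sin (l * t)) := by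
  have hderiv : deriv (fun s => a * sin (k * s) + b * sin (l * s))
      = fun s => a * k * cos (k * s) + b * l * cos (l * s) := by
    ext s
    rw [(((hasDerivAt_sin_const_mul k s).const_mul a).fun_add
      ((hasDerivAt_sin_const_mul l s).const_mul b)).deriv]
    ring
  rw [hderiv, (((hasDerivAt_cos_const_mul k t).const_mul _).fun_add
    ((hasDerivAt_cos_const_mul l t).const_mul _)).deriv]
  ring

noncomputable def twoModeResidual (N m n : ℕ) (A B Ω τ x : ℝ) : ℝ :=
  A * (N ^ 2 - Ω ^ 2) * cos τ * sin (N * x)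
    + B * (n ^ 2 - m ^ 2 * Ω ^ 2) * cos (m * τ) * sin (n * x)
    + (A * cos τ * sin (N * x) + B * cos (m * τ) * sin (n * x)) ^ 3 / sin x ^ 2

theorem eq_twoModeResidual {N m n : ℕ} {A B Ω : ℝ} {u R : ℝ → ℝ → ℝ}
    (hu : ∀ τ x : ℝ, u τ x = A * cos τ * sin (N * x) + B * cos (m * τ) * sin (n * x))
    (hR : ∀ τ x : ℝ, R τ x = Ω ^ 2 * deriv (deriv fun t => u t x) τ
      - deriv (deriv fun y => u τ y) x + u τ x ^ 3 / sin x ^ 2) :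
    R = twoModeResidual N m n A B Ω := by
  ext τ x
  have htime : (fun t => u t x)
      = fun t => A * sin (N * x) * cos (1 * t) + B * sin (n * x) * cos (m * t) := by
    ext t
    rw [hu, one_mul]
    ring
  have hspace : (fun y => u τ y)
      = fun y => A * cos τ * sin (N * y) + B * cos (m * τ) * sin (n * y) :=
    funext (hu τ)
  rw [hR, htime, hspace, deriv_deriv_mul_cos_add_mul_cos, deriv_deriv_mul_sin_add_mul_sin, hu,
    twoModeResidual, one_mul]
  ring

theorem resonant_coupling_eq_zero {N m n : ℕ} (h : 5 ≤ m ∨ 3 * N ≤ n) :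
    (∫ τ in 0..2 * π, cos τ ^ 3 * cos (m * τ))
      * ∫ x in 0..π, sinRatio N x ^ 2 * (sin (N * x) * sin (n * x)) = 0 := by
  rcases h with hm | hNn
  · have htime := integral_cos_int_mul_pow_three_mul_cos sin_two_pi (j := 1) (k := m)
      (by omega) (by omega) (by omega) (by omega)
    simp only [Int.cast_one, one_mul, Int.cast_natCast] at htime
    rw [htime, zero_mul]
  · rw [integral_sinRatio_sq_mul_sin_mul_sin sin_pi hNn, mul_zero]

theorem integral_integral_twoModeResidual_mul_first_mode {N m n : ℕ} (hN : 0 < N)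
    (hm : 3 ≤ m) (hNn : N ≤ n) (hres : 5 ≤ m ∨ 3 * N ≤ n) (A B Ω : ℝ) :
    ∫ τ in 0..2 * π, ∫ x in 0..π, twoModeResidual N m n A B Ω τ x * cos τ * sin (N * x)
      = π ^ 2 / 8 * A * (3 * N * A ^ 2 + 6 * N * B ^ 2 - 4 * Ω ^ 2 + 4 * N ^ 2) := by
  rw [integral_integral_eq_sum_mul pi_pos.le (s := Finset.univ)
    (f := ![fun τ => cos τ ^ 2, fun τ => cos τ * cos (m * τ), fun τ => cos τ ^ 4,
      fun τ => cos τ ^ 3 * cos (m * τ), fun τ => cos τ ^ 2 * cos (m * τ) ^ 2,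
      fun τ => cos (m * τ) ^ 3 * cos τ])
    (g := ![fun x => A * (N ^ 2 - Ω ^ 2) * sin (N * x) ^ 2,
      fun x => B * (n ^ 2 - m ^ 2 * Ω ^ 2) * (sin (N * x) * sin (n * x)),
      fun x => A ^ 3 * (sinRatio N x ^ 2 * sin (N * x) ^ 2),
      fun x => 3 * A ^ 2 * B * (sinRatio N x ^ 2 * (sin (N * x) * sin (n * x))),
      fun x => 3 * A * B ^ 2 * (sinRatio N x ^ 2 * sin (n * x) ^ 2),
      fun x => B ^ 3 * (sinRatio n x ^ 2 * (sin (N * x) * sin (n * x)))])]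
  · have e₁ : ∫ τ in 0..2 * π, cos τ ^ 2 = π := by simp
    have e₂ : ∫ τ in 0..2 * π, cos τ * cos (m * τ) = 0 := by
      simpa using integral_cos_mul_cos_of_ne sin_two_pi (j := 1) (k := m) (by omega) (by omega)
    have e₃ : ∫ τ in 0..2 * π, cos τ ^ 4 = 3 * (2 * π) / 8 := by
      simpa using integral_cos_int_mul_pow_four sin_two_pi (k := 1) one_ne_zero
    have e₄ : ∫ τ in 0..2 * π, cos τ ^ 2 * cos (m * τ) ^ 2 = 2 * π / 4 := by
      simpa using integral_cos_int_mul_sq_mul_cos_int_mul_sq sin_two_pi (j := 1) (k := m)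
        one_ne_zero (by omega) (by omega) (by omega)
    have e₅ : ∫ τ in 0..2 * π, cos (m * τ) ^ 3 * cos τ = 0 := by
      simpa using integral_cos_int_mul_pow_three_mul_cos sin_two_pi (j := m) (k := 1)
        (by omega) (by omega) (by omega) (by omega)
    simp only [Fin.sum_univ_six, Matrix.cons_val, integral_const_mul]
    rw [e₁, e₂, e₃, e₄, e₅, integral_sin_natCast_mul_sq sin_pi hN,
      integral_sinRatio_sq_mul_sin_sq sin_pi le_rfl, integral_sinRatio_sq_mul_sin_sq sin_pi hNn]
    linear_combination 3 * A ^ 2 * B * resonant_coupling_eq_zero hres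
  · intro τ x hx
    have hs : sin x ≠ 0 := (sin_pos_of_pos_of_lt_pi hx.1 hx.2).ne'
    simp only [twoModeResidual, Fin.sum_univ_six, Matrix.cons_val]
    rw [sin_natCast_mul_eq_sinRatio_mul N, sin_natCast_mul_eq_sinRatio_mul n]
    field_simp
    ring
  · intro i _
    fin_cases i <;> exact Continuous.intervalIntegrable (by simp; fun_prop) _ _
  · intro i _
    fin_cases i <;> exact Continuous.intervalIntegrable (by simp; fun_prop) _ _

theorem integral_integral_twoModeResidual_mul_second_mode {N m n : ℕ} (hn : 0 < n)
    (hm : 3 ≤ m) (hNn : N ≤ n) (hres : 5 ≤ m ∨ 3 * N ≤ n) (A B Ω : ℝ) :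
    ∫ τ in 0..2 * π, ∫ x in 0..π, twoModeResidual N m n A B Ω τ x * cos (m * τ) * sin (n * x)
      = π ^ 2 / 8 * B * (6 * N * A ^ 2 + 3 * n * B ^ 2 - 4 * m ^ 2 * Ω ^ 2 + 4 * n ^ 2) := by
  rw [integral_integral_eq_sum_mul pi_pos.le (s := Finset.univ)
    (f := ![fun τ => cos (m * τ) ^ 2, fun τ => cos τ * cos (m * τ),
      fun τ => cos τ ^ 3 * cos (m * τ), fun τ => cos τ ^ 2 * cos (m * τ) ^ 2,
      fun τ => cos (m * τ) ^ 3 * cos τ, fun τ => cos (m * τ) ^ 4])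
    (g := ![fun x => B * (n ^ 2 - m ^ 2 * Ω ^ 2) * sin (n * x) ^ 2,
      fun x => A * (N ^ 2 - Ω ^ 2) * (sin (N * x) * sin (n * x)),
      fun x => A ^ 3 * (sinRatio N x ^ 2 * (sin (N * x) * sin (n * x))),
      fun x => 3 * A ^ 2 * B * (sinRatio N x ^ 2 * sin (n * x) ^ 2),
      fun x => 3 * A * B ^ 2 * (sinRatio n x ^ 2 * (sin (N * x) * sin (n * x))),
      fun x => B ^ 3 * (sinRatio n x ^ 2 * sin (n * x) ^ 2)])]
  · have e₁ : ∫ τ in 0..2 * π, cos (m * τ) ^ 2 = 2 * π / 2 := by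
      simpa using integral_cos_int_mul_sq sin_two_pi (k := m) (by omega)
    have e₂ : ∫ τ in 0..2 * π, cos τ * cos (m * τ) = 0 := by
      simpa using integral_cos_mul_cos_of_ne sin_two_pi (j := 1) (k := m) (by omega) (by omega)
    have e₄ : ∫ τ in 0..2 * π, cos τ ^ 2 * cos (m * τ) ^ 2 = 2 * π / 4 := by
      simpa using integral_cos_int_mul_sq_mul_cos_int_mul_sq sin_two_pi (j := 1) (k := m)
        one_ne_zero (by omega) (by omega) (by omega)
    have e₅ : ∫ τ in 0..2 * π, cos (m * τ) ^ 3 * cos τ = 0 := by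
      simpa using integral_cos_int_mul_pow_three_mul_cos sin_two_pi (j := m) (k := 1)
        (by omega) (by omega) (by omega) (by omega)
    have e₆ : ∫ τ in 0..2 * π, cos (m * τ) ^ 4 = 3 * (2 * π) / 8 := by
      simpa using integral_cos_int_mul_pow_four sin_two_pi (k := m) (by omega)
    simp only [Fin.sum_univ_six, Matrix.cons_val, integral_const_mul]
    rw [e₁, e₂, e₄, e₅, e₆, integral_sin_natCast_mul_sq sin_pi hn,
      integral_sinRatio_sq_mul_sin_sq sin_pi hNn, integral_sinRatio_sq_mul_sin_sq sin_pi le_rfl]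
    linear_combination A ^ 3 * resonant_coupling_eq_zero hres
  · intro τ x hx
    have hs : sin x ≠ 0 := (sin_pos_of_pos_of_lt_pi hx.1 hx.2).ne'
    simp only [twoModeResidual, Fin.sum_univ_six, Matrix.cons_val]
    rw [sin_natCast_mul_eq_sinRatio_mul N, sin_natCast_mul_eq_sinRatio_mul n]
    field_simp
    ring
  · intro i _
    fin_cases i <;> exact Continuous.intervalIntegrable (by simp; fun_prop) _ _
  · intro i _
    fin_cases i <;> exact Continuous.intervalIntegrable (by simp; fun_prop) _ _

theorem two_mode_galerkin (N m n : ℕ) (hN : 0 < N) (hm3 : 3 ≤ m) (hnN : N ≤ n)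
    (hred : 5 ≤ m ∨ 3 * N ≤ n) (A B Ω : ℝ)
    (u : ℝ → ℝ → ℝ)
    (hu : ∀ τ x : ℝ, u τ x
      = A * Real.cos τ * Real.sin (N * x) + B * Real.cos (m * τ) * Real.sin (n * x))
    (R : ℝ → ℝ → ℝ)
    (hR : ∀ τ x : ℝ, R τ x
      = Ω ^ 2 * deriv (deriv (fun t => u t x)) τ - deriv (deriv (fun y => u τ y)) x
        + (u τ x) ^ 3 / (Real.sin x) ^ 2) :
    (∫ τ in (0:ℝ)..(2 * π), ∫ x in (0:ℝ)..π,
        R τ x * Real.cos τ * Real.sin (N * x))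
      = (π ^ 2 / 8) * A * (3 * N * A ^ 2 + 6 * N * B ^ 2 - 4 * Ω ^ 2 + 4 * N ^ 2)
    ∧
    (∫ τ in (0:ℝ)..(2 * π), ∫ x in (0:ℝ)..π,
        R τ x * Real.cos (m * τ) * Real.sin (n * x))
      = (π ^ 2 / 8) * B * (6 * N * A ^ 2 + 3 * n * B ^ 2 - 4 * m ^ 2 * Ω ^ 2 + 4 * n ^ 2) := by
  rw [eq_twoModeResidual hu hR]
  exact ⟨integral_integral_twoModeResidual_mul_first_mode hN hm3 hnN hred A B Ω,
    integral_integral_twoModeResidual_mul_second_mode (hN.trans_le hnN) hm3 hnN hred A B Ω⟩
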